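/- Let Λ_l(Φ) = Φ² + A·Φ + C be a quadratic in Φ with A = (1+p/2)(1−s−p/η) + (s+p/η)²/2 − η(1−s−p/η)² and C ≤ 0, and let Φ₀ = 1−ηs−p−(1−η) > 0, where η∈(0,1), s,p≥0, s+p/η≤1. Then Λ_l'(Φ₀) > 0; consequently on [0, Φ₀] the function Λ_l is either strictly increasing, or first strictly decreasing and then strictly increasing. -/

import Mathlib

/-! With `t = s + p / η` one has `Φ₀ = η (1 - t)`, and the slope `2 Φ₀ + A` of `Λ_l` at `Φ₀`
regroups as `η (1 - t)(1 + t) + (1 + p/2)(1 - t) + t² / 2`, a sum of positive terms because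
`0 ≤ t < 1`. A monic quadratic is strictly decreasing left of its vertex `-A/2` and strictly
increasing right of it; a positive slope at `Φ₀` puts the vertex left of `Φ₀`, which leaves the
two shapes on `[0, Φ₀]`. -/

lemma hasDerivAt_monic_quadratic (A C x : ℝ) :
    HasDerivAt (fun Φ : ℝ => Φ ^ 2 + A * Φ + C) (2 * x + A) x := by
  simpa using (((hasDerivAt_pow 2 x).add ((hasDerivAt_id x).const_mul A)).add_const C)

lemma monic_quadratic_sub (A C x y : ℝ) :
    (y ^ 2 + A * y + C) - (x ^ 2 + A * x + C) = (y - x) * (x + y + A) := by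
  ring

lemma strictMonoOn_monic_quadratic (A C : ℝ) :
    StrictMonoOn (fun Φ : ℝ => Φ ^ 2 + A * Φ + C) (Set.Ici (-A / 2)) := by
  intro x hx y hy hxy
  have hx : -A / 2 ≤ x := hx
  have hy : -A / 2 ≤ y := hy
  have := monic_quadratic_sub A C x y
  have : 0 < (y - x) * (x + y + A) := mul_pos (by linarith) (by linarith)
  simp only
  linarith

lemma strictAntiOn_monic_quadratic (A C : ℝ) :
    StrictAntiOn (fun Φ : ℝ => Φ ^ 2 + A * Φ + C) (Set.Iic (-A / 2)) := by
  intro x hx y hy hxy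
  have hx : x ≤ -A / 2 := hx
  have hy : y ≤ -A / 2 := hy
  have := monic_quadratic_sub A C x y
  have : (y - x) * (x + y + A) < 0 := mul_neg_of_pos_of_neg (by linarith) (by linarith)
  simp only
  linarith

lemma monic_quadratic_strictMonoOn_or_valley (A C b : ℝ) (hb : 0 < 2 * b + A) :
    StrictMonoOn (fun Φ : ℝ => Φ ^ 2 + A * Φ + C) (Set.Icc 0 b) ∨
      ∃ m ∈ Set.Ioo (0 : ℝ) b,
        StrictAntiOn (fun Φ : ℝ => Φ ^ 2 + A * Φ + C) (Set.Icc 0 m) ∧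
        StrictMonoOn (fun Φ : ℝ => Φ ^ 2 + A * Φ + C) (Set.Icc m b) := by
  rcases le_or_gt 0 A with hA | hA
  · left
    exact (strictMonoOn_monic_quadratic A C).mono fun x hx => by
      simp only [Set.mem_Ici]; linarith [hx.1]
  · right
    refine ⟨-A / 2, ⟨by linarith, by linarith⟩, ?_, ?_⟩
    · exact (strictAntiOn_monic_quadratic A C).mono fun x hx => hx.2
    · exact (strictMonoOn_monic_quadratic A C).mono fun x hx => hx.1

lemma slope_pos_of_lt_one {η p t : ℝ} (hη : 0 < η) (hp : 0 ≤ p) (ht₀ : 0 ≤ t) (ht₁ : t < 1) :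
    0 < 2 * (η * (1 - t)) + ((1 + p / 2) * (1 - t) + t ^ 2 / 2 - η * (1 - t) ^ 2) := by
  have hregroup : 2 * (η * (1 - t)) + ((1 + p / 2) * (1 - t) + t ^ 2 / 2 - η * (1 - t) ^ 2)
      = η * (1 - t) * (1 + t) + (1 + p / 2) * (1 - t) + t ^ 2 / 2 := by ring
  have h₁ : 0 < 1 - t := by linarith
  rw [hregroup]
  positivity

theorem stmt4_general (η s p A C : ℝ) (hη : η ∈ Set.Ioo (0:ℝ) 1) (hs : 0 ≤ s) (hp : 0 ≤ p)
    (hA : A = (1 + p / 2) * (1 - s - p / η) + (s + p / η)^2 / 2 - η * (1 - s - p / η)^2)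
    (hΦ₀ : 0 < 1 - η * s - p - (1 - η)) :
    0 < deriv (fun Φ : ℝ => Φ^2 + A * Φ + C) (1 - η * s - p - (1 - η)) ∧
    (StrictMonoOn (fun Φ : ℝ => Φ^2 + A * Φ + C) (Set.Icc 0 (1 - η * s - p - (1 - η))) ∨
      ∃ m ∈ Set.Ioo (0:ℝ) (1 - η * s - p - (1 - η)),
        StrictAntiOn (fun Φ : ℝ => Φ^2 + A * Φ + C) (Set.Icc 0 m) ∧
        StrictMonoOn (fun Φ : ℝ => Φ^2 + A * Φ + C) (Set.Icc m (1 - η * s - p - (1 - η)))) := by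
  have hη₀ : 0 < η := hη.1
  have hΦ₀_eq : 1 - η * s - p - (1 - η) = η * (1 - (s + p / η)) := by
    field_simp
    ring
  have ht₀ : 0 ≤ s + p / η := by positivity
  have ht₁ : s + p / η < 1 := by
    have := (mul_pos_iff_of_pos_left hη₀).mp (hΦ₀_eq ▸ hΦ₀)
    linarith
  have hslope : 0 < 2 * (1 - η * s - p - (1 - η)) + A := by
    rw [hΦ₀_eq, hA, show 1 - s - p / η = 1 - (s + p / η) by ring]
    exact slope_pos_of_lt_one hη₀ hp ht₀ ht₁
  refine ⟨?_, monic_quadratic_strictMonoOn_or_valley A C _ hslope⟩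
  rwa [(hasDerivAt_monic_quadratic A C _).deriv]

theorem stmt4 (η s p A C : ℝ) (hη : η ∈ Set.Ioo (0:ℝ) 1) (hs : 0 ≤ s) (hp : 0 ≤ p)
    (hsp : s + p / η ≤ 1)
    (hA : A = (1 + p / 2) * (1 - s - p / η) + (s + p / η)^2 / 2 - η * (1 - s - p / η)^2)
    (hC : C ≤ 0)
    (hΦ₀ : 0 < 1 - η * s - p - (1 - η)) :
    0 < deriv (fun Φ : ℝ => Φ^2 + A * Φ + C) (1 - η * s - p - (1 - η)) ∧
    (StrictMonoOn (fun Φ : ℝ => Φ^2 + A * Φ + C) (Set.Icc 0 (1 - η * s - p - (1 - η))) ∨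
      ∃ m ∈ Set.Ioo (0:ℝ) (1 - η * s - p - (1 - η)),
        StrictAntiOn (fun Φ : ℝ => Φ^2 + A * Φ + C) (Set.Icc 0 m) ∧
        StrictMonoOn (fun Φ : ℝ => Φ^2 + A * Φ + C) (Set.Icc m (1 - η * s - p - (1 - η)))) :=
  stmt4_general η s p A C hη hs hp hA hΦ₀
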